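/- (Theorem 1, Part 3.) In the AQE tabular setting, the expected post-update estimation bias is nonincreasing in the ensemble size N: for all integers 1 ≤ K ≤ N, E[Z_{K,N+1}] ≤ E[Z_{K,N}]. -/

import Mathlib

open MeasureTheory ProbabilityTheory Finset

/-- The average of the `K` smallest values among `x 0, …, x (N-1)`:
sort the tuple nondecreasingly and average the first `K` entries. -/
noncomputable def avgKSmallest {N : ℕ} (K : ℕ) (x : Fin N → ℝ) : ℝ :=
  (∑ i ∈ Finset.univ.filter (fun i : Fin N => (i : ℕ) < K), x (Tuple.sort x i)) / K

/-- Maximum of a real-valued function over a finite nonempty type. -/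
noncomputable def fmax {A : Type*} [Fintype A] [Nonempty A] (f : A → ℝ) : ℝ :=
  Finset.univ.sup' Finset.univ_nonempty f

/-!
The inequality holds pointwise in `ω`. The sum of the `K` smallest of `N` numbers is the least
sum over `K`-element sets of indices, and the `K`-element sets of the first `N` samples are among
those of the first `N + 1`; hence `Q̄_{K,N+1}(a) ≤ Q̄_{K,N}(a)` for every action `a`. Taking the
maximum over actions and multiplying by `γ > 0` preserve this, so it survives integration. The same
description of the sum as a minimum of finitely many integrable sums gives integrability.
-/

theorem Finset.sum_le_sum_of_card_eq_of_forall_le {ι M : Type*} [DecidableEq ι] [AddCommMonoid M]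
    [LinearOrder M] [IsOrderedAddMonoid M] {f : ι → M} {T S : Finset ι} (hcard : #T = #S)
    (hT : ∀ t ∈ T, ∀ s ∉ T, f t ≤ f s) : ∑ i ∈ T, f i ≤ ∑ i ∈ S, f i := by
  rw [← sum_inter_add_sum_sdiff T S, ← sum_inter_add_sum_sdiff S T, inter_comm]
  refine add_le_add_right ?_ _
  have hcard' : #(T \ S) = #(S \ T) := card_sdiff_comm hcard
  rcases (T \ S).eq_empty_or_nonempty with hTS | hTS
  · rw [hTS, card_empty, eq_comm, card_eq_zero] at hcard'
    simp [hTS, hcard']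
  · calc ∑ i ∈ T \ S, f i ≤ #(T \ S) • (T \ S).sup' hTS f :=
          sum_le_card_nsmul _ _ _ fun t ht => le_sup' f ht
      _ = #(S \ T) • (T \ S).sup' hTS f := by rw [hcard']
      _ ≤ ∑ i ∈ S \ T, f i := card_nsmul_le_sum _ _ _ fun s hs =>
          sup'_le _ _ fun t ht => hT t (mem_sdiff.1 ht).1 s (mem_sdiff.1 hs).2

namespace Tuple

variable {α : Type*} [LinearOrder α] {N K : ℕ}

def lowestIndices (K : ℕ) (x : Fin N → α) : Finset (Fin N) :=
  (univ.filter fun i : Fin N => (i : ℕ) < K).image (sort x)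

theorem card_lowestIndices (K : ℕ) (x : Fin N → α) : #(lowestIndices K x) = min N K := by
  rw [lowestIndices, card_image_of_injective _ (sort x).injective, Fin.card_filter_val_lt]

theorem le_of_mem_lowestIndices_of_notMem {x : Fin N → α} {t s : Fin N}
    (ht : t ∈ lowestIndices K x) (hs : s ∉ lowestIndices K x) : x t ≤ x s := by
  obtain ⟨i, hi, rfl⟩ := mem_image.1 ht
  have hs_rank : ¬ ((sort x).symm s : ℕ) < K := fun h =>
    hs (mem_image.2 ⟨_, mem_filter.2 ⟨mem_univ _, h⟩, (sort x).apply_symm_apply s⟩)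
  have hi_rank : (i : ℕ) < K := (mem_filter.1 hi).2
  simpa using monotone_sort x (Fin.le_def.2 (by omega) : i ≤ (sort x).symm s)

theorem sum_lowestIndices {M : Type*} [AddCommMonoid M] [LinearOrder M] (K : ℕ) (x : Fin N → M) :
    ∑ i ∈ lowestIndices K x, x i
      = ∑ i ∈ univ.filter (fun i : Fin N => (i : ℕ) < K), x (sort x i) :=
  sum_image fun _ _ _ _ h => (sort x).injective h

variable {M : Type*} [AddCommMonoid M] [LinearOrder M] [IsOrderedAddMonoid M]

theorem sum_lowestIndices_le_sum (x : Fin N → M) {S : Finset (Fin N)} (hS : #S = K) :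
    ∑ i ∈ lowestIndices K x, x i ≤ ∑ i ∈ S, x i := by
  have hKN : K ≤ N := hS ▸ card_le_univ S |>.trans_eq (Fintype.card_fin N)
  refine sum_le_sum_of_card_eq_of_forall_le ?_ fun t ht s hs =>
    le_of_mem_lowestIndices_of_notMem ht hs
  rw [card_lowestIndices, hS, min_eq_right hKN]

end Tuple

open Tuple

section AvgKSmallest

variable {N M K : ℕ}

theorem avgKSmallest_eq_sum_lowestIndices (x : Fin N → ℝ) :
    avgKSmallest K x = (∑ i ∈ lowestIndices K x, x i) / K := by
  rw [avgKSmallest, sum_lowestIndices]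

theorem avgKSmallest_eq_inf' (hKN : K ≤ N) (x : Fin N → ℝ) :
    avgKSmallest K x = (univ.powersetCard K).inf' (powersetCard_nonempty.2 (by simpa))
      (fun S => ∑ i ∈ S, x i) / K := by
  rw [avgKSmallest_eq_sum_lowestIndices]
  congr 1
  refine le_antisymm (le_inf' _ _ fun S hS => sum_lowestIndices_le_sum x (mem_powersetCard.1 hS).2)
    (inf'_le _ (mem_powersetCard.2 ⟨subset_univ _, ?_⟩))
  rw [card_lowestIndices, min_eq_right hKN]

theorem avgKSmallest_le_comp (hKN : K ≤ N) (f : Fin N ↪ Fin M) (x : Fin M → ℝ) :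
    avgKSmallest K x ≤ avgKSmallest K (x ∘ f) := by
  simp only [avgKSmallest_eq_sum_lowestIndices]
  refine div_le_div_of_nonneg_right ?_ K.cast_nonneg
  calc ∑ i ∈ lowestIndices K x, x i ≤ ∑ i ∈ (lowestIndices K (x ∘ f)).map f, x i :=
        sum_lowestIndices_le_sum x (by rw [card_map, card_lowestIndices, min_eq_right hKN])
    _ = ∑ i ∈ lowestIndices K (x ∘ f), (x ∘ f) i := sum_map _ _ _

end AvgKSmallest

theorem fmax_mono {A : Type*} [Fintype A] [Nonempty A] {f g : A → ℝ} (h : ∀ a, f a ≤ g a) :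
    fmax f ≤ fmax g :=
  sup'_mono_fun fun a _ => h a

section Integrability

variable {Ω : Type*} [MeasurableSpace Ω] {μ : Measure Ω}

theorem Finset.integrable_sup' {ι β : Type*} [NormedAddCommGroup β] [Lattice β] [HasSolidNorm β]
    [IsOrderedAddMonoid β] {s : Finset ι} (hs : s.Nonempty) {f : ι → Ω → β}
    (hf : ∀ i ∈ s, Integrable (f i) μ) : Integrable (s.sup' hs f) μ :=
  sup'_induction (p := fun g => Integrable g μ) hs f (fun _ hf _ hg => hf.sup hg) hf

theorem Finset.integrable_inf' {ι β : Type*} [NormedAddCommGroup β] [Lattice β] [HasSolidNorm β]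
    [IsOrderedAddMonoid β] {s : Finset ι} (hs : s.Nonempty) {f : ι → Ω → β}
    (hf : ∀ i ∈ s, Integrable (f i) μ) : Integrable (s.inf' hs f) μ :=
  inf'_induction (p := fun g => Integrable g μ) hs f (fun _ hf _ hg => hf.inf hg) hf

theorem integrable_fmax {A : Type*} [Fintype A] [Nonempty A] {X : A → Ω → ℝ}
    (hX : ∀ a, Integrable (X a) μ) : Integrable (fun ω => fmax fun a => X a ω) μ := by
  simp only [fmax, ← Finset.sup'_apply]
  exact integrable_sup' _ fun a _ => hX a

theorem integrable_avgKSmallest {N K : ℕ} (hKN : K ≤ N) {X : Fin N → Ω → ℝ}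
    (hX : ∀ j, Integrable (X j) μ) : Integrable (fun ω => avgKSmallest K fun j => X j ω) μ := by
  simp only [avgKSmallest_eq_inf' hKN]
  refine Integrable.div_const ?_ _
  convert integrable_inf' _ fun S _ => integrable_finsetSum S fun i _ => hX i using 1
  ext ω
  rw [Finset.inf'_apply]

end Integrability

theorem aqe_expected_bias_antitone_in_ensemble_size_general
    {Ω : Type*} [MeasurableSpace Ω] (μ : Measure Ω) [IsProbabilityMeasure μ]
    {A : Type*} [Fintype A] [Nonempty A]
    (Qpi : A → ℝ) (γ : ℝ) (hγ : 0 < γ)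
    (e : ℕ → A → Ω → ℝ)
    (hint : ∀ j a, Integrable (e j a) μ)
    (Q : ℕ → A → Ω → ℝ) (hQ : ∀ j a ω, Q j a ω = Qpi a + e j a ω)
    (N K : ℕ) (hKN : K ≤ N) :
    ∫ ω, γ * (fmax (fun a => avgKSmallest K (fun j : Fin (N + 1) => Q j a ω)) - fmax Qpi) ∂μ
      ≤ ∫ ω, γ * (fmax (fun a => avgKSmallest K (fun j : Fin N => Q j a ω)) - fmax Qpi) ∂μ := by
  have hQ_int (j : ℕ) (a : A) : Integrable (Q j a) μ := by
    rw [funext (hQ j a)]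
    exact (integrable_const _).add (hint j a)
  have hbias_int (M : ℕ) (hKM : K ≤ M) : Integrable (fun ω =>
      γ * (fmax (fun a => avgKSmallest K (fun j : Fin M => Q j a ω)) - fmax Qpi)) μ :=
    ((integrable_fmax fun a => integrable_avgKSmallest hKM fun j => hQ_int j a).sub
      (integrable_const _)).const_mul γ
  refine integral_mono (hbias_int _ (hKN.trans N.le_succ)) (hbias_int N hKN) fun ω => ?_
  gcongr
  exact fmax_mono fun a => avgKSmallest_le_comp hKN Fin.castSuccEmb fun j => Q j a ω

/-- **Theorem 1, Part 3 (AQE).** In the tabular AQE setting, the expected post-update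
estimation bias is nonincreasing in the ensemble size `N`:
for all `1 ≤ K ≤ N`, `E[Z_{K,N+1}] ≤ E[Z_{K,N}]`. -/
theorem aqe_expected_bias_antitone_in_ensemble_size
    {Ω : Type*} [MeasurableSpace Ω] (μ : Measure Ω) [IsProbabilityMeasure μ]
    {A : Type*} [Fintype A] [Nonempty A]
    (Qpi : A → ℝ) (γ : ℝ) (hγ : 0 < γ)
    (e : ℕ → A → Ω → ℝ)
    (hint : ∀ j a, Integrable (e j a) μ)
    (hmean : ∀ j a, ∫ ω, e j a ω ∂μ = 0)
    (hident : ∀ j a j' a', IdentDistrib (e j a) (e j' a') μ μ)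
    (hindep : iIndepFun (fun p : ℕ × A => e p.1 p.2) μ)
    (Q : ℕ → A → Ω → ℝ) (hQ : ∀ j a ω, Q j a ω = Qpi a + e j a ω)
    (N K : ℕ) (hK1 : 1 ≤ K) (hKN : K ≤ N) :
    ∫ ω, γ * (fmax (fun a => avgKSmallest K (fun j : Fin (N + 1) => Q j a ω)) - fmax Qpi) ∂μ
      ≤ ∫ ω, γ * (fmax (fun a => avgKSmallest K (fun j : Fin N => Q j a ω)) - fmax Qpi) ∂μ :=
  aqe_expected_bias_antitone_in_ensemble_size_general μ Qpi γ hγ e hint Q hQ N K hKN
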